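/- arXiv:1810.07247 — 3 statements merged into one kernel-verified Lean document; each statement's English description precedes it below -/
import Mathlib

section
/- Let S : ℝ → ℝ be differentiable, decreasing, and concave, and let 0 < a ≤ 1 and b > 0 with b ≥ 1/a and not (a = b = 1). Then inf_{σ ∈ ℝ} a^{S(σ)} b^{S(σ)-σ} = 0. -/
open Real Filter

theorem inf_eq_zero_of_large_b (S : ℝ → ℝ) (hS : Differentiable ℝ S)
    (hS' : ∀ σ, deriv S σ < 0) (hconc : ConcaveOn ℝ Set.univ S)
    (a b : ℝ) (ha0 : 0 < a) (ha1 : a ≤ 1) (hb0 : 0 < b) (hba : 1 / a ≤ b)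
    (hne : ¬ (a = 1 ∧ b = 1)) :
    (⨅ σ : ℝ, a ^ S σ * b ^ (S σ - σ)) = 0 := by
  set f : ℝ → ℝ := fun σ => a ^ S σ * b ^ (S σ - σ) with hf
  have hfpos : ∀ σ, 0 < f σ := fun σ =>
    mul_pos (Real.rpow_pos_of_pos ha0 _) (Real.rpow_pos_of_pos hb0 _)
  have hbdd : BddBelow (Set.range f) := ⟨0, by rintro x ⟨σ, rfl⟩; exact (hfpos σ).le⟩
  have hab1 : 1 ≤ a * b := by
    rw [div_le_iff₀ ha0] at hba; linarith [hba]
  have hb1 : 1 < b := by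
    rcases lt_or_ge 1 b with h | h
    · exact h
    · exfalso
      have hb : b = 1 := le_antisymm h (le_trans (by
          rw [le_div_iff₀ ha0]; linarith) hba)
      have ha : a = 1 := by nlinarith
      exact hne ⟨ha, hb⟩
  have hanti : StrictAnti S := strictAnti_of_deriv_neg hS' 
  -- rewrite f
  have hfeq : ∀ σ, f σ = (a * b) ^ S σ * b ^ (-σ) := by
    intro σ
    have : S σ - σ = S σ + (-σ) := by ring
    rw [hf]
    simp only
    rw [this, Real.rpow_add hb0, Real.mul_rpow ha0.le hb0.le]
    ring
  have hub : ∀ σ ≥ (0:ℝ), f σ ≤ (a * b) ^ S 0 * b ^ (-σ) := by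
    intro σ hσ
    rw [hfeq σ]
    have h1 : (a * b) ^ S σ ≤ (a * b) ^ S 0 :=
      Real.rpow_le_rpow_of_exponent_le hab1 (hanti.antitone hσ)
    exact mul_le_mul_of_nonneg_right h1 (Real.rpow_pos_of_pos hb0 _).le
  have htendg : Tendsto (fun σ : ℝ => (a * b) ^ S 0 * b ^ (-σ)) atTop (nhds 0) := by
    have hexp : ∀ σ : ℝ, b ^ (-σ) = Real.exp (Real.log b * (-σ)) := fun σ =>
      Real.rpow_def_of_pos hb0 _
    have h1 : Tendsto (fun σ : ℝ => Real.log b * (-σ)) atTop atBot := by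
      have hlb : 0 < Real.log b := Real.log_pos hb1
      exact (tendsto_neg_atTop_atBot.const_mul_atBot hlb)
    have h2 : Tendsto (fun σ : ℝ => b ^ (-σ)) atTop (nhds 0) := by
      simp only [hexp]
      exact Real.tendsto_exp_atBot.comp h1
    have := h2.const_mul ((a*b) ^ S 0)
    simpa using this
  have htendf : Tendsto f atTop (nhds 0) := by
    apply tendsto_of_tendsto_of_tendsto_of_le_of_le' tendsto_const_nhds htendg
    · exact Eventually.of_forall fun σ => (hfpos σ).le
    · filter_upwards [eventually_ge_atTop (0:ℝ)] with σ hσ using hub σ hσ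
  apply le_antisymm
  · exact ge_of_tendsto htendf (Eventually.of_forall fun σ => ciInf_le hbdd σ)
  · exact Real.iInf_nonneg fun σ => (hfpos σ).le
end

section
/- Fix x₀ ∈ ℝ and a sequence of coefficients (c_{j,k}). The 2-microlocal domain D = {(s, s') : ∃ C > 0, ∀ j ≥ 0, ∀ k with |k - 2^j x₀| < 2^j, |c_{j,k}| ≤ C 2^{-js}(1+|k-2^j x₀|)^{-s'}} is a convex subset of ℝ². -/
theorem microlocal_domain_convex (x₀ : ℝ) (c : ℕ → ℤ → ℝ) :
    Convex ℝ {p : ℝ × ℝ | ∃ C > (0 : ℝ), ∀ j : ℕ, ∀ k : ℤ,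
      |(k : ℝ) - 2 ^ (j : ℝ) * x₀| < 2 ^ (j : ℝ) →
      |c j k| ≤ C * 2 ^ (-(j : ℝ) * p.1) *
        (1 + |(k : ℝ) - 2 ^ (j : ℝ) * x₀|) ^ (-p.2)} := by
  rintro ⟨s₁, t₁⟩ ⟨C₁, hC₁, h₁⟩ ⟨s₂, t₂⟩ ⟨C₂, hC₂, h₂⟩ a b ha hb hab
  refine ⟨C₁ ^ a * C₂ ^ b, by positivity, fun j k hk => ?_⟩
  have h1 := h₁ j k hk
  have h2 := h₂ j k hk
  set d : ℝ := |(k : ℝ) - 2 ^ (j : ℝ) * x₀| with hd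
  have hd0 : (0:ℝ) < 1 + d := by positivity
  simp only [Prod.smul_fst, Prod.smul_snd, Prod.fst_add, Prod.snd_add,
    smul_eq_mul]
  have key : C₁ ^ a * C₂ ^ b * 2 ^ (-(j:ℝ) * (a * s₁ + b * s₂)) *
      (1 + d) ^ (-(a * t₁ + b * t₂)) =
      (C₁ * 2 ^ (-(j:ℝ) * s₁) * (1 + d) ^ (-t₁)) ^ a *
      (C₂ * 2 ^ (-(j:ℝ) * s₂) * (1 + d) ^ (-t₂)) ^ b := by
    rw [Real.mul_rpow (by positivity) (by positivity),
        Real.mul_rpow (by positivity) (by positivity),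
        Real.mul_rpow (by positivity) (by positivity),
        Real.mul_rpow (by positivity) (by positivity)]
    rw [← Real.rpow_mul (by norm_num : (0:ℝ) ≤ 2),
        ← Real.rpow_mul (by norm_num : (0:ℝ) ≤ 2),
        ← Real.rpow_mul hd0.le, ← Real.rpow_mul hd0.le,
        show -(↑j:ℝ) * (a * s₁ + b * s₂) = -↑j * s₁ * a + -↑j * s₂ * b by ring,
        show -(a * t₁ + b * t₂) = -t₁ * a + -t₂ * b by ring,
        Real.rpow_add (by norm_num : (0:ℝ) < 2),
        Real.rpow_add hd0]
    ring
  rw [key]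
  rcases eq_or_lt_of_le (abs_nonneg (c j k)) with h0 | h0
  · rw [← h0]
    positivity
  · calc |c j k| = |c j k| ^ a * |c j k| ^ b := by
          rw [← Real.rpow_add h0, hab, Real.rpow_one]
      _ ≤ (C₁ * 2 ^ (-(j:ℝ) * s₁) * (1 + d) ^ (-t₁)) ^ a *
          (C₂ * 2 ^ (-(j:ℝ) * s₂) * (1 + d) ^ (-t₂)) ^ b := by
          exact mul_le_mul (Real.rpow_le_rpow (abs_nonneg _) h1 ha)
            (Real.rpow_le_rpow (abs_nonneg _) h2 hb)
            (Real.rpow_nonneg (abs_nonneg _) b) (by positivity)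
end

section
/- Let 0 ≤ γ < 1 and α ∈ ℝ. Suppose c_{j,k} are defined for j ∈ ℕ, |k| < 2^j, with |c_{j_n,k_n}| = 2^{-j_n α} along a sequence with j_n strictly increasing and 1 + |k_n| = K_n 2^{j_n γ} where log₂(K_n)/j_n → 0. Then for any (σ₀, s₀) on the line S(σ) = α + (γ/(1-γ))(α-σ) and any ε > 0, there is NO constant C with |c_{j,k}| ≤ C 2^{-j(s₀+ε)}(1+|k|)^{s₀+ε-σ₀} for all j ≥ 0, |k| < 2^j. -/
theorem linear_frontier_necessity_above (γ α : ℝ) (hγ0 : 0 ≤ γ) (hγ1 : γ < 1)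
    (c : ℕ → ℤ → ℝ) (j : ℕ → ℕ) (hj : StrictMono j)
    (k : ℕ → ℤ) (K : ℕ → ℝ) (hK : ∀ n, 0 < K n)
    (hpos : ∀ n, |(k n : ℝ)| < 2 ^ (j n : ℝ))
    (hsize : ∀ n, |c (j n) (k n)| = 2 ^ (-(j n : ℝ) * α))
    (hloc : ∀ n, 1 + |(k n : ℝ)| = K n * 2 ^ ((j n : ℝ) * γ))
    (hKsub : Filter.Tendsto (fun n => Real.logb 2 (K n) / (j n : ℝ)) Filter.atTop (nhds 0))
    (σ₀ s₀ : ℝ) (hline : s₀ = α + (γ / (1 - γ)) * (α - σ₀)) (ε : ℝ) (hε : 0 < ε) :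
    ¬ ∃ C > (0 : ℝ), ∀ j' : ℕ, ∀ k' : ℤ, |(k' : ℝ)| < 2 ^ (j' : ℝ) →
      |c j' k'| ≤ C * 2 ^ (-(j' : ℝ) * (s₀ + ε)) * (1 + |(k' : ℝ)|) ^ (s₀ + ε - σ₀) := by
  rintro ⟨C, hC0, hC⟩
  set β := s₀ + ε - σ₀ with hβ
  -- j n → ∞
  have hjn : Filter.Tendsto (fun n => (j n : ℝ)) Filter.atTop Filter.atTop :=
    tendsto_natCast_atTop_atTop.comp hj.tendsto_atTop
  -- pointwise inequality for n ≥ 1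
  have hkey : ∀ n, 1 ≤ n → -α ≤ Real.logb 2 C / (j n : ℝ) - (s₀ + ε)
      + β * (Real.logb 2 (K n) / (j n : ℝ) + γ) := by
    intro n hn
    set J := (j n : ℝ) with hJ
    have hJ1 : (1 : ℝ) ≤ J := by
      have h0 : n ≤ j n := hj.le_apply
      rw [hJ]; exact_mod_cast le_trans hn h0
    have hJ0 : (0 : ℝ) < J := lt_of_lt_of_le one_pos hJ1
    have h := hC (j n) (k n) (hpos n)
    rw [hsize n, hloc n] at h
    have hrw : (2 : ℝ) ^ (Real.logb 2 C + -J * (s₀ + ε) + (Real.logb 2 (K n) + J * γ) * β)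
        = C * 2 ^ (-J * (s₀ + ε)) * (K n * 2 ^ (J * γ)) ^ β := by
      have e1 : (2 : ℝ) ^ ((Real.logb 2 (K n) + J * γ) * β) = (K n * 2 ^ (J * γ)) ^ β := by
        rw [Real.rpow_mul (by norm_num : (0:ℝ) ≤ 2), Real.rpow_add two_pos,
          Real.rpow_logb two_pos (by norm_num) (hK n)]
      rw [Real.rpow_add two_pos, Real.rpow_add two_pos, e1,
        Real.rpow_logb two_pos (by norm_num) hC0]
    rw [← hrw] at h
    have hexp : -J * α ≤ Real.logb 2 C + -J * (s₀ + ε) + (Real.logb 2 (K n) + J * γ) * β :=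
      (Real.rpow_le_rpow_left_iff one_lt_two).mp h
    have hdiv : -α ≤ (Real.logb 2 C + -J * (s₀ + ε) + (Real.logb 2 (K n) + J * γ) * β) / J := by
      rw [le_div_iff₀ hJ0]; nlinarith [hexp]
    have heq : (Real.logb 2 C + -J * (s₀ + ε) + (Real.logb 2 (K n) + J * γ) * β) / J
        = Real.logb 2 C / J - (s₀ + ε) + β * (Real.logb 2 (K n) / J + γ) := by
      field_simp; ring
    linarith [heq ▸ hdiv]
  -- the RHS tends to -(s₀+ε) + β*γ
  have hlim : Filter.Tendsto (fun n => Real.logb 2 C / (j n : ℝ) - (s₀ + ε)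
      + β * (Real.logb 2 (K n) / (j n : ℝ) + γ)) Filter.atTop
      (nhds (0 - (s₀ + ε) + β * (0 + γ))) := by
    exact ((Filter.Tendsto.div_atTop tendsto_const_nhds hjn).sub_const _).add
      ((hKsub.add_const γ).const_mul β)
  have hfin : -α ≤ 0 - (s₀ + ε) + β * (0 + γ) :=
    ge_of_tendsto hlim (Filter.eventually_atTop.mpr ⟨1, hkey⟩)
  have h1γ : (1 : ℝ) - γ ≠ 0 := by linarith
  have hl : s₀ * (1 - γ) = α * (1 - γ) + γ * (α - σ₀) := by
    rw [hline]; field_simp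
  nlinarith [hfin, hl, hε, hγ1]
end
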